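/- Let γ : ℕ → ℝ with associated polynomials P_n(x) = Σ_{k=0}^n (γ_k/k!) D^k[x^n] ∈ ℝ[x] for n ≥ 0. Then there exists a positive-definite moment functional 𝓛 : ℝ[x] → ℝ with respect to which {P_n}_{n=0}^∞ is an orthogonal polynomial sequence (i.e., deg P_n = n for all n and 𝓛[P_m P_n] = 0 for m ≠ n) if and only if γ_0 ≠ 0 and there exist α, β ∈ ℝ with α > 0 such that P_n = γ_0 · H_n^α(x − β) for all n (equivalently, γ_k is the k-th derivative at 0 of x ↦ γ_0·exp(−(α/2)x² − βx) for all k). -/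

import Mathlib

/-!
Both directions go through the three-term recurrence
`P (n + 2) = (X - β) P (n + 1) - (n + 1) α P n`, `P 1 = (X - β) P 0`, which characterises
`γ 0 • H α n (X - β)`. The `P n` form an Appell sequence, `(P (n + 1))' = (n + 1) P n`, and
then the defect of the recurrence obeys the same derivative identity.

If the `P n` are orthogonal for a positive-definite `L`, take `β` from `P 1` and
`α = L((X - β)²) / L 1 > 0`, which makes `L` kill the first defect. Each defect is constant once
the previous one vanishes, and orthogonality makes `L` kill it, so all defects vanish.

Conversely, the Gaussian functional `L p = ∫ p(x) exp(-(x - β)² / 2α) dx` is positive definite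
and satisfies `L((X - β) p) = α L(p')` by integration by parts; with the recurrence this gives
`L(P (n + 1) q) = α L(P n q')`, so `L(P n q) = 0` whenever `deg q < n`.
-/

open Polynomial

noncomputable section

open Finset Real Filter Topology MeasureTheory

lemma LinearMap.map_C_mul {K M : Type*} [CommSemiring K] [AddCommMonoid M] [Module K M]
    (L : K[X] →ₗ[K] M) (c : K) (p : K[X]) : L (C c * p) = c • L p := by
  rw [← smul_eq_C_mul, map_smul]

namespace Polynomial

section Appell

variable {K : Type*} [Field K] (γ : ℕ → K)

def appell (n : ℕ) : K[X] :=
  ∑ k ∈ range (n + 1), C (γ k / (k.factorial : K)) * derivative^[k] (X ^ n)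

lemma appell_eq_sum_choose [CharZero K] (n : ℕ) :
    appell γ n = ∑ k ∈ range (n + 1), C (γ k * n.choose k) * X ^ (n - k) := by
  refine sum_congr rfl fun k _ => ?_
  rw [iterate_derivative_X_pow_eq_C_mul, ← mul_assoc, ← C_mul,
    Nat.descFactorial_eq_factorial_mul_choose]
  have : (k.factorial : K) ≠ 0 := Nat.cast_ne_zero.2 k.factorial_ne_zero
  push_cast
  field_simp

@[simp]
lemma appell_zero : appell γ 0 = C (γ 0) := by
  simp [appell]

lemma appell_one : appell γ 1 = C (γ 0) * X + C (γ 1) := by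
  simp [appell, sum_range_succ]

lemma coeff_appell_self [CharZero K] (n : ℕ) : (appell γ n).coeff n = γ 0 := by
  rw [appell_eq_sum_choose, finsetSum_coeff, sum_eq_single 0]
  · simp
  · intro k hk hk0
    rw [coeff_C_mul_X_pow, if_neg (by simp at hk; omega)]
  · simp

lemma degree_appell_le [CharZero K] (n : ℕ) : (appell γ n).degree ≤ n := by
  rw [appell_eq_sum_choose]
  refine (degree_sum_le _ _).trans (Finset.sup_le fun k _ => ?_)
  exact (degree_C_mul_X_pow_le _ _).trans (by exact_mod_cast n.sub_le k)

lemma degree_appell [CharZero K] {γ : ℕ → K} (hγ : γ 0 ≠ 0) (n : ℕ) :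
    (appell γ n).degree = n :=
  (degree_appell_le γ n).antisymm (le_degree_of_ne_zero <| by rwa [coeff_appell_self])

lemma derivative_appell_succ (n : ℕ) :
    derivative (appell γ (n + 1)) = C ((n : K) + 1) * appell γ n := by
  rw [appell, appell, derivative_sum, sum_range_succ, mul_sum]
  rw [derivative_C_mul, ← Function.iterate_succ_apply' derivative,
    iterate_derivative_eq_zero (by simp), mul_zero, add_zero]
  refine sum_congr rfl fun k _ => ?_
  rw [derivative_C_mul, ← Function.iterate_succ_apply' derivative, Function.iterate_succ_apply,
    derivative_X_pow, Nat.add_sub_cancel, iterate_derivative_C_mul]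
  push_cast
  ring

end Appell

section Hermite

variable {K : Type*} [CommRing K] (α β : K) (P : ℕ → K[X])

def hermiteDefect (n : ℕ) : K[X] :=
  P (n + 2) - (X - C β) * P (n + 1) + C ((n + 1) * α) * P n

variable {P}

lemma derivative_hermiteDefect_zero (h₀ : derivative (P 0) = 0)
    (h : ∀ n, derivative (P (n + 1)) = C ((n : K) + 1) * P n) :
    derivative (hermiteDefect α β P 0) = P 1 - (X - C β) * P 0 := by
  simp only [hermiteDefect, derivative_add, derivative_sub, derivative_mul, h, h₀,
    derivative_X, derivative_C]
  simp only [map_add, map_one, map_zero, map_natCast, Nat.cast_zero]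
  ring

lemma derivative_hermiteDefect_succ (h : ∀ n, derivative (P (n + 1)) = C ((n : K) + 1) * P n)
    (n : ℕ) :
    derivative (hermiteDefect α β P (n + 1)) = C ((n : K) + 2) * hermiteDefect α β P n := by
  simp only [hermiteDefect, derivative_add, derivative_sub, derivative_mul, h,
    derivative_X, derivative_C]
  simp only [map_add, map_mul, map_one, map_ofNat, map_natCast]
  push_cast
  ring

lemma eq_of_hermiteDefect_eq_zero {Q : ℕ → K[X]} (h₀ : P 0 = Q 0)
    (hP₁ : P 1 = (X - C β) * P 0) (hQ₁ : Q 1 = (X - C β) * Q 0)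
    (hP : ∀ n, hermiteDefect α β P n = 0) (hQ : ∀ n, hermiteDefect α β Q n = 0) :
    P = Q := by
  have key : ∀ n, P n = Q n ∧ P (n + 1) = Q (n + 1) := by
    intro n
    induction n with
    | zero => exact ⟨h₀, by rw [hP₁, hQ₁, h₀]⟩
    | succ n ih =>
      refine ⟨ih.2, ?_⟩
      have hPn := hP n
      have hQn := hQ n
      simp only [hermiteDefect, ih.1, ih.2] at hPn hQn
      linear_combination hPn - hQn
  exact _root_.funext fun n => (key n).1

lemma hermiteDefect_comp_X_sub_C (H : ℕ → K[X])
    (hH : ∀ n, H (n + 2) = X * H (n + 1) - C (α * (n + 1)) * H n) (c : K) (n : ℕ) :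
    hermiteDefect α β (fun n => C c * (H n).comp (X - C β)) n = 0 := by
  simp only [hermiteDefect, hH, sub_comp, mul_comp, X_comp, C_comp]
  simp only [C_mul, C_add, C_1]
  ring

end Hermite

lemma map_mul_eq_zero_of_degree_lt {K : Type*} [Field K] {P : ℕ → K[X]}
    {L : K[X] →ₗ[K] K} (hdeg : ∀ n, (P n).degree = n)
    (horth : ∀ m n, m ≠ n → L (P m * P n) = 0) {n : ℕ} {q : K[X]} (hq : q.degree < n) :
    L (P n * q) = 0 := by
  let S : Sequence K := ⟨P, hdeg⟩
  have hspan : degreeLT K n ≤ LinearMap.ker (L ∘ₗ LinearMap.mulLeft K (P n)) := by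
    rw [← S.span_degreeLT fun i _ => (leadingCoeff_ne_zero.2 (S.ne_zero i)).isUnit,
      Submodule.span_le]
    rintro _ ⟨i, hi, rfl⟩
    exact horth n i (ne_of_gt hi)
  exact hspan (mem_degreeLT.2 hq)

lemma map_mul_eq_zero_of_ne {K : Type*} [CommSemiring K] {P : ℕ → K[X]} {L : K[X] →ₗ[K] K}
    (hdeg : ∀ n, (P n).degree = n)
    (h : ∀ (n : ℕ) (q : K[X]), q.degree < n → L (P n * q) = 0) {m n : ℕ} (hmn : m ≠ n) :
    L (P m * P n) = 0 := by
  rcases hmn.lt_or_gt with hlt | hlt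
  · rw [mul_comm]
    exact h n _ (by rw [hdeg]; exact_mod_cast hlt)
  · exact h m _ (by rw [hdeg]; exact_mod_cast hlt)

section Orthogonal

variable {K : Type*} [Field K] [CharZero K] {L : K[X] →ₗ[K] K}

lemma eq_zero_of_derivative_eq_zero_of_map_eq_zero (hL : L 1 ≠ 0) {p : K[X]}
    (hp : derivative p = 0) (hLp : L p = 0) : p = 0 := by
  rw [eq_C_of_derivative_eq_zero hp] at hLp ⊢
  rw [← mul_one (C _), LinearMap.map_C_mul, smul_eq_mul] at hLp
  rw [(mul_eq_zero.1 hLp).resolve_right hL, map_zero]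

lemma hermiteDefect_eq_zero_of_orthogonal {α β : K} {P : ℕ → K[X]} (hL : L 1 ≠ 0)
    (h : ∀ n, derivative (P (n + 1)) = C ((n : K) + 1) * P n)
    (horth : ∀ (n : ℕ) (q : K[X]), q.degree < n → L (P n * q) = 0)
    (h₀ : hermiteDefect α β P 0 = 0) (n : ℕ) : hermiteDefect α β P n = 0 := by
  have hLP : ∀ m, L (P (m + 1)) = 0 := fun m => by
    simpa using horth (m + 1) 1 (by rw [degree_one]; exact_mod_cast m.succ_pos)
  induction n with
  | zero => exact h₀
  | succ n ih =>
    refine eq_zero_of_derivative_eq_zero_of_map_eq_zero hL ?_ ?_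
    · rw [derivative_hermiteDefect_succ α β h, ih, mul_zero]
    · have hlin : L ((X - C β) * P (n + 2)) = 0 := by
        rw [mul_comm]
        exact horth _ _ (by rw [degree_X_sub_C]; exact_mod_cast (by omega : 1 < n + 2))
      rw [hermiteDefect, map_add, map_sub, hlin, LinearMap.map_C_mul, hLP, hLP, smul_zero,
        sub_zero, add_zero]

end Orthogonal

lemma exists_hermiteDefect_appell_eq_zero {γ : ℕ → ℝ} (hγ : γ 0 ≠ 0)
    {L : ℝ[X] →ₗ[ℝ] ℝ} (hpos : ∀ p : ℝ[X], p ≠ 0 → (∀ x, 0 ≤ p.eval x) → 0 < L p)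
    (horth : ∀ (n : ℕ) (q : ℝ[X]), q.degree < n → L (appell γ n * q) = 0) :
    ∃ α β : ℝ, 0 < α ∧ appell γ 1 = (X - C β) * appell γ 0 ∧
      ∀ n, hermiteDefect α β (appell γ) n = 0 := by
  set β := -γ 1 / γ 0 with hβ
  have hP₁ : appell γ 1 = (X - C β) * appell γ 0 := by
    have : C (γ 1) = -C β * C (γ 0) := by
      rw [← map_neg, ← map_mul]
      congr 1
      rw [hβ]
      field_simp
    rw [appell_one, appell_zero, this]
    ring
  have hL₁ : 0 < L 1 := hpos 1 one_ne_zero (by simp)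
  have hL₂ : 0 < L ((X - C β) ^ 2) :=
    hpos _ (pow_ne_zero 2 (X_sub_C_ne_zero β)) fun x => by simpa using sq_nonneg (x - β)
  set α := L ((X - C β) ^ 2) / L 1
  refine ⟨α, β, div_pos hL₂ hL₁, hP₁,
    hermiteDefect_eq_zero_of_orthogonal hL₁.ne' (derivative_appell_succ γ) horth ?_⟩
  refine eq_zero_of_derivative_eq_zero_of_map_eq_zero hL₁.ne' ?_ ?_
  · rw [derivative_hermiteDefect_zero α β (by simp) (derivative_appell_succ γ), hP₁, sub_self]
  · have hL₀ : L (appell γ 2) = 0 := by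
      simpa using horth 2 1 (by rw [degree_one]; exact_mod_cast two_pos)
    have hsq : (X - C β) * ((X - C β) * C (γ 0)) = C (γ 0) * (X - C β) ^ 2 := by ring
    have hconst : C (1 * α) * C (γ 0) = C (γ 0 * α) * 1 := by
      rw [← map_mul, mul_one, one_mul, mul_comm]
    simp only [hermiteDefect, Nat.cast_zero, zero_add]
    rw [map_add, map_sub, hL₀, hP₁, appell_zero, hsq, hconst, LinearMap.map_C_mul,
      LinearMap.map_C_mul, smul_eq_mul, smul_eq_mul, mul_assoc, div_mul_cancel₀ _ hL₁.ne']
    ring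

section Stein

variable {K : Type*} [CommRing K] {α β : K} {P : ℕ → K[X]} {L : K[X] →ₗ[K] K}
  (hL : ∀ p, L ((X - C β) * p) = α * L (derivative p)) (h₀ : derivative (P 0) = 0)
  (h : ∀ n, derivative (P (n + 1)) = C ((n : K) + 1) * P n) (hP₁ : P 1 = (X - C β) * P 0)
  (hP : ∀ n, hermiteDefect α β P n = 0)
include hL h₀ h hP₁ hP

lemma map_succ_mul_eq_of_hermiteDefect (n : ℕ) (q : K[X]) :
    L (P (n + 1) * q) = α * L (P n * derivative q) := by
  cases n with
  | zero => rw [hP₁, mul_assoc, hL, derivative_mul, h₀, zero_mul, zero_add]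
  | succ n =>
    have hrec : P (n + 2) * q = (X - C β) * (P (n + 1) * q) - C ((n + 1) * α) * (P n * q) := by
      have hn := hP n
      rw [hermiteDefect] at hn
      linear_combination q * hn
    rw [hrec, map_sub, hL, derivative_mul, h, LinearMap.map_C_mul, map_add, mul_assoc,
      LinearMap.map_C_mul, smul_eq_mul, smul_eq_mul]
    ring

lemma map_mul_eq_zero_of_hermiteDefect {n : ℕ} {q : K[X]} (hq : q.degree < n) :
    L (P n * q) = 0 := by
  induction n generalizing q with
  | zero => rw [show q = 0 by simpa using hq, mul_zero, map_zero]
  | succ n ih =>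
    have hq' : (derivative q).degree < n := by
      rw [degree_lt_iff_coeff_zero] at hq ⊢
      intro m hm
      rw [coeff_derivative, hq (m + 1) (by omega), zero_mul]
    rw [map_succ_mul_eq_of_hermiteDefect hL h₀ h hP₁ hP, ih hq', mul_zero]

end Stein

section Gaussian

variable {b : ℝ} (hb : 0 < b)
include hb

lemma integrable_eval_mul_exp_neg_mul_sq (p : ℝ[X]) :
    Integrable fun x => p.eval x * exp (-b * x ^ 2) := by
  simp_rw [eval_eq_sum_range, sum_mul]
  refine integrable_finsetSum _ fun i _ => ?_
  simp_rw [mul_assoc]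
  refine Integrable.const_mul ?_ _
  simpa [rpow_natCast] using
    integrable_rpow_mul_exp_neg_mul_sq hb (neg_one_lt_zero.trans_le (Nat.cast_nonneg i))

lemma tendsto_eval_mul_exp_neg_mul_sq_cocompact (p : ℝ[X]) :
    Tendsto (fun x => p.eval x * exp (-b * x ^ 2)) (cocompact ℝ) (𝓝 0) := by
  simp_rw [eval_eq_sum_range, sum_mul]
  rw [← sum_const_zero (s := range (p.natDegree + 1))]
  refine tendsto_finsetSum _ fun i _ => ?_
  simp_rw [mul_assoc]
  rw [← mul_zero (p.coeff i)]
  refine Tendsto.const_mul _ (tendsto_zero_iff_norm_tendsto_zero.2 ?_)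
  simpa [abs_pow, rpow_natCast, abs_of_pos (exp_pos _)] using
    tendsto_rpow_abs_mul_exp_neg_mul_sq_cocompact hb i

lemma integrable_eval_mul_exp_neg_mul_sub_sq (β : ℝ) (p : ℝ[X]) :
    Integrable fun x => p.eval x * exp (-b * (x - β) ^ 2) := by
  simpa [taylor_eval] using
    (integrable_eval_mul_exp_neg_mul_sq hb (taylor β p)).comp_sub_right β

lemma tendsto_eval_mul_exp_neg_mul_sub_sq_cocompact (β : ℝ) (p : ℝ[X]) :
    Tendsto (fun x => p.eval x * exp (-b * (x - β) ^ 2)) (cocompact ℝ) (𝓝 0) := by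
  simpa [Function.comp_def, taylor_eval] using
    (tendsto_eval_mul_exp_neg_mul_sq_cocompact hb (taylor β p)).comp
      (Homeomorph.subRight β).isClosedEmbedding.tendsto_cocompact

end Gaussian

section GaussianFunctional

def gaussianFunctional {α : ℝ} (hα : 0 < α) (β : ℝ) : ℝ[X] →ₗ[ℝ] ℝ where
  toFun p := ∫ x, p.eval x * exp (-(2 * α)⁻¹ * (x - β) ^ 2)
  map_add' p q := by
    simp only [eval_add, add_mul]
    exact integral_add (integrable_eval_mul_exp_neg_mul_sub_sq (by positivity) β p)
      (integrable_eval_mul_exp_neg_mul_sub_sq (by positivity) β q)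
  map_smul' c p := by
    simp only [eval_smul, smul_eq_mul, mul_assoc, RingHom.id_apply]
    exact integral_const_mul c _

variable {α : ℝ} (hα : 0 < α) (β : ℝ)

lemma gaussianFunctional_apply (p : ℝ[X]) :
    gaussianFunctional hα β p = ∫ x, p.eval x * exp (-(2 * α)⁻¹ * (x - β) ^ 2) :=
  rfl

lemma gaussianFunctional_X_sub_C_mul (p : ℝ[X]) :
    gaussianFunctional hα β ((X - C β) * p) = α * gaussianFunctional hα β (derivative p) := by
  set w : ℝ → ℝ := fun x => exp (-(2 * α)⁻¹ * (x - β) ^ 2)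
  have hb : 0 < (2 * α)⁻¹ := by positivity
  have hderiv : ∀ x, HasDerivAt (fun x => p.eval x * w x)
      ((derivative p - C α⁻¹ * ((X - C β) * p)).eval x * w x) x := fun x => by
    have hw := ((((hasDerivAt_id x).sub_const β).pow 2).const_mul (-(2 * α)⁻¹)).exp
    refine ((p.hasDerivAt x).mul hw).congr_deriv ?_
    simp only [w, eval_sub, eval_mul, eval_C, eval_X, id, Pi.pow_apply]
    field_simp
    ring
  have hIBP := integral_of_hasDerivAt_of_tendsto hderiv
    (integrable_eval_mul_exp_neg_mul_sub_sq hb β _)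
    ((tendsto_eval_mul_exp_neg_mul_sub_sq_cocompact hb β p).mono_left atBot_le_cocompact)
    ((tendsto_eval_mul_exp_neg_mul_sub_sq_cocompact hb β p).mono_left atTop_le_cocompact)
  rw [sub_zero, ← gaussianFunctional_apply hα, map_sub, LinearMap.map_C_mul, smul_eq_mul] at hIBP
  rw [sub_eq_zero] at hIBP
  rw [hIBP, mul_inv_cancel_left₀ hα.ne']

lemma gaussianFunctional_pos {p : ℝ[X]} (hp : p ≠ 0) (hnonneg : ∀ x, 0 ≤ p.eval x) :
    0 < gaussianFunctional hα β p := by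
  have hb : 0 < (2 * α)⁻¹ := by positivity
  rw [gaussianFunctional_apply, integral_pos_iff_support_of_nonneg
    (fun x => mul_nonneg (hnonneg x) (exp_pos _).le)
    (integrable_eval_mul_exp_neg_mul_sub_sq hb β p)]
  have hsupp : {x | p.IsRoot x}ᶜ ⊆ Function.support
      fun x => p.eval x * exp (-(2 * α)⁻¹ * (x - β) ^ 2) := fun x hx =>
    mul_ne_zero hx (exp_pos _).ne'
  refine lt_of_lt_of_le ?_ (measure_mono hsupp)
  have hfin := finite_setOfPred_isRoot hp
  exact hfin.isClosed.isOpen_compl.measure_pos volume hfin.infinite_compl.nonempty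

end GaussianFunctional

end Polynomial

end

/-- `P n = ∑_{k=0}^n (γ k / k!) D^k[x^n]` is an OPS with respect to a
positive-definite moment functional iff `γ 0 ≠ 0` and `P n = γ 0 · H_n^α(x - β)` for some
`α > 0`, `β ∈ ℝ`, where `H α` denotes the generalized Hermite polynomial family with
parameter `α`. -/
theorem stmt_8 (γ : ℕ → ℝ) (P : ℕ → Polynomial ℝ)
    (hP : ∀ n : ℕ, P n = ∑ k ∈ Finset.range (n + 1),
      Polynomial.C (γ k / (k.factorial : ℝ)) * Polynomial.derivative^[k] (Polynomial.X ^ n))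
    (H : ℝ → ℕ → Polynomial ℝ)
    (hH0 : ∀ α : ℝ, H α 0 = 1) (hH1 : ∀ α : ℝ, H α 1 = Polynomial.X)
    (hH : ∀ α : ℝ, ∀ n : ℕ, 2 ≤ n →
      H α n = Polynomial.X * H α (n - 1) - Polynomial.C (α * ((n : ℝ) - 1)) * H α (n - 2)) :
    (∃ L : Polynomial ℝ →ₗ[ℝ] ℝ,
        (∀ π : Polynomial ℝ, π ≠ 0 → (∀ x : ℝ, 0 ≤ π.eval x) → 0 < L π) ∧
        (∀ n : ℕ, (P n).degree = n) ∧
        (∀ m n : ℕ, m ≠ n → L (P m * P n) = 0)) ↔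
    (γ 0 ≠ 0 ∧ ∃ α β : ℝ, 0 < α ∧
      ∀ n : ℕ, P n = Polynomial.C (γ 0) * (H α n).comp (Polynomial.X - Polynomial.C β)) := by
  obtain rfl : P = appell γ := funext hP
  set Q : ℝ → ℝ → ℕ → ℝ[X] := fun α β n => C (γ 0) * (H α n).comp (X - C β)
  have hQ₁ (α β : ℝ) : Q α β 1 = (X - C β) * Q α β 0 := by
    simp only [Q, hH0, hH1, X_comp, one_comp]
    ring
  have hQ (α β : ℝ) (n : ℕ) : hermiteDefect α β (Q α β) n = 0 := by
    refine hermiteDefect_comp_X_sub_C α β (H α) (fun n => ?_) _ n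
    rw [hH α (n + 2) (by omega), Nat.add_sub_cancel]
    push_cast
    ring_nf
  constructor
  · rintro ⟨L, hpos, hdeg, horth⟩
    have hγ : γ 0 ≠ 0 := fun h => by simpa [h] using hdeg 0
    obtain ⟨α, β, hα, hP₁, hdef⟩ := exists_hermiteDefect_appell_eq_zero hγ hpos
      fun _ _ => map_mul_eq_zero_of_degree_lt hdeg horth
    exact ⟨hγ, α, β, hα, congrFun <|
      eq_of_hermiteDefect_eq_zero α β (by simp [hH0]) hP₁ (hQ₁ α β) hdef (hQ α β)⟩
  · rintro ⟨hγ, α, β, hα, hPQ⟩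
    have hPQ : appell γ = Q α β := funext hPQ
    have hP₁ : appell γ 1 = (X - C β) * appell γ 0 := hPQ ▸ hQ₁ α β
    have hdef : ∀ n, hermiteDefect α β (appell γ) n = 0 := hPQ ▸ hQ α β
    refine ⟨gaussianFunctional hα β, fun _ => gaussianFunctional_pos hα β, degree_appell hγ,
      fun _ _ => map_mul_eq_zero_of_ne (degree_appell hγ) fun _ _ => ?_⟩
    exact map_mul_eq_zero_of_hermiteDefect (gaussianFunctional_X_sub_C_mul hα β) (by simp)
      (derivative_appell_succ γ) hP₁ hdef
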